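/- arXiv:2602.06385 — 5 statements merged into one kernel-verified Lean document; each statement's English description precedes it below -/
import Mathlib

section
/- Let β > 0, let Δ ∈ ℝ^{m×r} be fixed, and let h ∈ ℝ. Then ‖Δ (h² Δᵀ Δ + β I)^{-1/2} − β^{-1/2} Δ‖_F ≤ ‖Δ‖_F · h² ‖Δ‖₂² / (2 β^{3/2}). -/
open Matrix

/-- Frobenius norm `‖M‖_F = √(tr (M Mᵀ))`. -/
noncomputable def fnorm {m n : ℕ} (M : Matrix (Fin m) (Fin n) ℝ) : ℝ :=
  Real.sqrt ((M * Mᵀ).trace)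

/-- Spectral (ℓ₂ operator) norm of a real matrix. -/
noncomputable def specNorm {m n : ℕ} (M : Matrix (Fin m) (Fin n) ℝ) : ℝ :=
  ‖LinearMap.toContinuousLinearMap (Matrix.toEuclideanLin M)‖

/-- Scalar perturbation bound for the inverse square root. -/
lemma key_scalar {β x d : ℝ} (hβ : 0 < β) (hx : 0 ≤ x) (hd : 0 ≤ d)
    (hdx : d ^ 2 * (x + β) = 1) : |d - (Real.sqrt β)⁻¹| ≤ x / (2 * (β * Real.sqrt β)) := by
  set s := Real.sqrt β with hs
  set t := Real.sqrt (x + β) with ht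
  have hs0 : 0 < s := Real.sqrt_pos.mpr hβ
  have hxb : 0 < x + β := by linarith
  have ht0 : 0 < t := Real.sqrt_pos.mpr hxb
  have hs2 : s ^ 2 = β := Real.sq_sqrt hβ.le
  have ht2 : t ^ 2 = x + β := Real.sq_sqrt hxb.le
  have hst : s ≤ t := Real.sqrt_le_sqrt (by linarith)
  have hdt : d = t⁻¹ := by
    have : d ^ 2 = (t⁻¹) ^ 2 := by
      field_simp
      nlinarith [hdx, ht2]
    have h2 : 0 ≤ t⁻¹ := by positivity
    nlinarith [this, hd, h2]
  rw [hdt, abs_sub_comm, abs_of_nonneg (by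
    have : t⁻¹ ≤ s⁻¹ := by gcongr
    linarith)]
  rw [le_div_iff₀ (by positivity)]
  have key : (s⁻¹ - t⁻¹) * (2 * (s^2 * s)) ≤ x := by
    have e1 : s⁻¹ - t⁻¹ = (t - s) / (s * t) := by field_simp
    rw [e1]
    rw [div_mul_eq_mul_div, div_le_iff₀ (by positivity)]
    have hx' : x = (t - s) * (t + s) := by nlinarith
    rw [hx']
    have h1 : 0 ≤ t - s := by linarith
    have h3 : 2 * s ^ 2 ≤ (t + s) * t := by nlinarith
    nlinarith [mul_le_mul_of_nonneg_right (mul_le_mul_of_nonneg_left h3 h1) hs0.le]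
  calc (s⁻¹ - t⁻¹) * (2 * (β * s)) = (s⁻¹ - t⁻¹) * (2 * (s^2 * s)) := by rw [hs2]
    _ ≤ x := key

/-- Quadratic-form bound by the spectral norm. -/
lemma spec_bound {m r : ℕ} (M : Matrix (Fin m) (Fin r) ℝ) (u : Fin r → ℝ) :
    ∑ k, (M *ᵥ u) k ^ 2 ≤ specNorm M ^ 2 * ∑ i, u i ^ 2 := by
  set x : EuclideanSpace ℝ (Fin r) := (WithLp.equiv 2 _).symm u with hx
  have h1 : ‖(LinearMap.toContinuousLinearMap (Matrix.toEuclideanLin M)) x‖ ≤ specNorm M * ‖x‖ :=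
    (LinearMap.toContinuousLinearMap (Matrix.toEuclideanLin M)).le_opNorm x
  have hxe : ‖x‖ ^ 2 = ∑ i, u i ^ 2 := by
    rw [EuclideanSpace.norm_eq]
    rw [Real.sq_sqrt (by positivity)]
    simp [hx, sq_abs]
  have hMe : ‖(LinearMap.toContinuousLinearMap (Matrix.toEuclideanLin M)) x‖ ^ 2
      = ∑ k, (M *ᵥ u) k ^ 2 := by
    rw [LinearMap.coe_toContinuousLinearMap']
    rw [hx, Matrix.toEuclideanLin_apply]
    rw [EuclideanSpace.norm_eq, Real.sq_sqrt (by positivity)]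
    simp [sq_abs]
  have h2 : ‖(LinearMap.toContinuousLinearMap (Matrix.toEuclideanLin M)) x‖ ^ 2
      ≤ (specNorm M * ‖x‖) ^ 2 := by
    apply sq_le_sq' _ h1
    nlinarith [norm_nonneg ((LinearMap.toContinuousLinearMap (Matrix.toEuclideanLin M)) x)]
  rw [hMe] at h2
  calc ∑ k, (M *ᵥ u) k ^ 2 ≤ (specNorm M * ‖x‖) ^ 2 := h2
    _ = specNorm M ^ 2 * ‖x‖ ^ 2 := by ring
    _ = specNorm M ^ 2 * ∑ i, u i ^ 2 := by rw [hxe]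

/-- Let `β > 0`, `Δ ∈ ℝ^{m×r}`, `h ∈ ℝ`, and let `R` be the PSD inverse square root
of the positive definite matrix `h² Δᵀ Δ + β I`.  Then
`‖Δ R − β^{-1/2} Δ‖_F ≤ ‖Δ‖_F · h² ‖Δ‖₂² / (2 β^{3/2})`. -/
theorem inv_sqrt_perturbation_bound {m r : ℕ} (β h : ℝ) (hβ : 0 < β)
    (Δ : Matrix (Fin m) (Fin r) ℝ)
    (R : Matrix (Fin r) (Fin r) ℝ) (hR : R.PosSemidef)
    (hRR : R * R * ((h ^ 2) • (Δᵀ * Δ) + β • 1) = 1) :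
    fnorm (Δ * R - (Real.sqrt β)⁻¹ • Δ) ≤
      fnorm Δ * (h ^ 2 * specNorm Δ ^ 2) / (2 * β ^ ((3 : ℝ) / 2)) := by
  classical
  have hH : R.IsHermitian := hR.1
  set S : Matrix (Fin r) (Fin r) ℝ := Δᵀ * Δ with hS
  set U : Matrix (Fin r) (Fin r) ℝ := (hH.eigenvectorUnitary : Matrix (Fin r) (Fin r) ℝ) with hU
  set V : Matrix (Fin r) (Fin r) ℝ := star U with hV
  have hVU : V * U = 1 := by
    rw [hV, hU]; exact Unitary.coe_star_mul_self hH.eigenvectorUnitary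
  have hUV : U * V = 1 := by
    rw [hV, hU]; exact Unitary.coe_mul_star_self hH.eigenvectorUnitary
  set d : Fin r → ℝ := hH.eigenvalues with hd
  set D : Matrix (Fin r) (Fin r) ℝ := Matrix.diagonal d with hD
  have hspec : R = U * D * V := by
    have := hH.spectral_theorem
    simpa [RCLike.ofReal_real_eq_id, hD, hd, hU, hV] using this
  set c : ℝ := (Real.sqrt β)⁻¹ with hc
  set E : Matrix (Fin r) (Fin r) ℝ := V * S * U with hE
  have conj_mul : ∀ A B : Matrix (Fin r) (Fin r) ℝ, (V*A*U)*(V*B*U) = V*(A*B)*U := by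
    intro A B
    simp only [Matrix.mul_assoc]
    rw [← Matrix.mul_assoc U V (B*U), hUV, Matrix.one_mul]
  have hVRU : V * R * U = D := by
    rw [hspec]
    calc V * (U * D * V) * U = (V*U) * (D * (V*U)) := by simp only [Matrix.mul_assoc]
      _ = D := by rw [hVU, Matrix.mul_one, Matrix.one_mul]
  have hVTU : V * ((h^2) • S + β • 1) * U = (h^2) • E + β • (1 : Matrix (Fin r) (Fin r) ℝ) := by
    have h0 : V * ((h^2) • S + β • 1) * U
        = (h^2) • (V * S * U) + β • (V * (1:Matrix (Fin r) (Fin r) ℝ) * U) := by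
      simp [Matrix.mul_add, Matrix.add_mul, Matrix.mul_smul, Matrix.smul_mul]
    rw [h0, Matrix.mul_one, hVU, ← hE]
  have hkey : D * D * ((h^2) • E + β • (1 : Matrix (Fin r) (Fin r) ℝ)) = 1 := by
    rw [← hVRU, ← hVTU, conj_mul, conj_mul, hRR, Matrix.mul_one, hVU]
  have hdiag : ∀ i, d i ^ 2 * (h^2 * E i i + β) = 1 := by
    intro i
    have h1 := congrFun (congrFun hkey i) i
    rw [hD, Matrix.diagonal_mul_diagonal] at h1
    simp [Matrix.diagonal_mul, Matrix.one_apply, Matrix.add_apply, Matrix.smul_apply,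
      Matrix.one_apply_eq] at h1
    nlinarith [h1]
  have hcol : ∀ i, ∑ k, U k i ^ 2 = 1 := by
    intro i
    have h1 := congrFun (congrFun hVU i) i
    simp [Matrix.mul_apply, hV, Matrix.one_apply_eq, Matrix.star_apply, sq] at h1
    convert h1 using 1
    exact Finset.sum_congr rfl (by intros; ring)
  have hEii : ∀ i, E i i = ∑ k, (Δ *ᵥ (fun l => U l i)) k ^ 2 := by
    intro i
    have h1 : E i i = (fun l => U l i) ⬝ᵥ ((Δᵀ * Δ) *ᵥ (fun l => U l i)) := by
      rw [hE, hS, Matrix.mul_assoc]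
      simp [Matrix.mul_apply, Matrix.mulVec, dotProduct, hV]
    rw [h1, ← Matrix.mulVec_mulVec, Matrix.dotProduct_mulVec, Matrix.vecMul_transpose,
      dotProduct]
    exact Finset.sum_congr rfl (by intros; ring)
  have hEnn : ∀ i, 0 ≤ E i i := fun i => by
    rw [hEii i]; exact Finset.sum_nonneg (fun k _ => sq_nonneg _)
  have hEle : ∀ i, E i i ≤ specNorm Δ ^ 2 := by
    intro i
    rw [hEii i]
    calc ∑ k, (Δ *ᵥ (fun l => U l i)) k ^ 2
        ≤ specNorm Δ ^ 2 * ∑ l, (U l i) ^ 2 := spec_bound Δ _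
      _ = specNorm Δ ^ 2 := by rw [hcol i, mul_one]
  have hdnn : ∀ i, 0 ≤ d i := fun i => hR.eigenvalues_nonneg i
  set K : ℝ := h^2 * specNorm Δ ^ 2 / (2*(β*Real.sqrt β)) with hK
  have hKnn : 0 ≤ K := by
    have h0 : (0:ℝ) ≤ specNorm Δ ^ 2 := sq_nonneg _
    positivity
  have habs : ∀ i, |d i - c| ≤ K := by
    intro i
    have h1 := key_scalar hβ (mul_nonneg (sq_nonneg h) (hEnn i)) (hdnn i) (hdiag i)
    refine h1.trans ?_
    rw [hK]
    gcongr
    exact hEle i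
  set M : Matrix (Fin r) (Fin r) ℝ := R - c • 1 with hM
  have hgoalL : Δ * R - c • Δ = Δ * M := by
    rw [hM, Matrix.mul_sub, Matrix.mul_smul, Matrix.mul_one]
  set Dc : Matrix (Fin r) (Fin r) ℝ := Matrix.diagonal (fun i => d i - c) with hDc
  have hDcD : Dc = D - c • 1 := by
    ext i j
    by_cases hij : i = j <;>
      simp [hDc, hD, Matrix.diagonal_apply, Matrix.one_apply, hij]
  have hMdec : M = U * Dc * V := by
    rw [hDcD, hM, hspec, Matrix.mul_sub, Matrix.sub_mul]
    congr 1
    rw [Matrix.mul_smul, Matrix.mul_one, Matrix.smul_mul, hUV]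
  have hMM : M * M = U * (Dc * Dc) * V := by
    rw [hMdec]
    calc (U*Dc*V)*(U*Dc*V) = U*(Dc*((V*U)*(Dc*V))) := by simp only [Matrix.mul_assoc]
      _ = U*(Dc*Dc)*V := by rw [hVU, Matrix.one_mul]; simp only [Matrix.mul_assoc]
  have hMsym : Mᵀ = M := by
    have hRt : Rᵀ = R := by
      have h0 := hH
      rwa [Matrix.IsHermitian, Matrix.conjTranspose_eq_transpose_of_trivial] at h0
    rw [hM, Matrix.transpose_sub, hRt, Matrix.transpose_smul, Matrix.transpose_one]
  have htr : ((Δ * M) * (Δ * M)ᵀ).trace = ∑ i, (d i - c)^2 * E i i := by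
    rw [Matrix.transpose_mul, hMsym]
    have e1 : Δ * M * (M * Δᵀ) = Δ * ((M * M) * Δᵀ) := by simp only [Matrix.mul_assoc]
    rw [e1, Matrix.trace_mul_comm, Matrix.mul_assoc, ← hS, hMM]
    have e2 : U * (Dc * Dc) * V * S = U * ((Dc * Dc) * (V * S)) := by
      simp only [Matrix.mul_assoc]
    rw [e2, Matrix.trace_mul_comm, Matrix.mul_assoc, Matrix.mul_assoc, ← hE,
      ← Matrix.mul_assoc, hDc, Matrix.diagonal_mul_diagonal]
    simp only [Matrix.trace, Matrix.diag, Matrix.diagonal_mul]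
    exact Finset.sum_congr rfl (by intros; ring)
  have htrS : (Δ * Δᵀ).trace = ∑ i, E i i := by
    rw [Matrix.trace_mul_comm, ← hS]
    have h0 : E.trace = S.trace := by
      rw [hE, Matrix.trace_mul_comm (V*S) U, ← Matrix.mul_assoc, hUV, Matrix.one_mul]
    rw [← h0]
    simp [Matrix.trace, Matrix.diag]
  have hrpow : β ^ ((3:ℝ)/2) = β * Real.sqrt β := by
    have h0 : ((3:ℝ)/2) = (1:ℝ) + 1/2 := by norm_num
    rw [h0, Real.rpow_add hβ, Real.rpow_one, Real.sqrt_eq_rpow]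
  have hsum : ∑ i, (d i - c)^2 * E i i ≤ K^2 * ∑ i, E i i := by
    rw [Finset.mul_sum]
    apply Finset.sum_le_sum
    intro i _
    have h1 : (d i - c)^2 ≤ K^2 := by
      rw [← sq_abs (d i - c)]
      exact pow_le_pow_left₀ (abs_nonneg _) (habs i) 2
    exact mul_le_mul_of_nonneg_right h1 (hEnn i)
  rw [fnorm, fnorm, hgoalL, htr, htrS, hrpow]
  calc Real.sqrt (∑ i, (d i - c)^2 * E i i)
      ≤ Real.sqrt (K^2 * ∑ i, E i i) := Real.sqrt_le_sqrt hsum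
    _ = K * Real.sqrt (∑ i, E i i) := by
        rw [Real.sqrt_mul (sq_nonneg K), Real.sqrt_sq hKnn]
    _ = Real.sqrt (∑ i, E i i) * (h ^ 2 * specNorm Δ ^ 2) / (2 * (β * Real.sqrt β)) := by
        rw [hK]; ring
end

section
/- Let σ ≠ 0 be a real number. There is no non-constant polynomial P ∈ ℝ[a,b] such that ∂_a P(a,b) · b(ab−σ)·√(a²(ab−σ)²+β) + ∂_b P(a,b) · a(ab−σ)·√(b²(ab−σ)²+β) = 0 holds identically for all (a,b) ∈ ℝ², where β > 0 is fixed. That is, the scalar β-smoothed spectral gradient flow for the loss (1/2)(ab−σ)² admits no non-constant polynomial invariant. -/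
/-!
Squaring the invariance identity and cancelling `(ab - σ)²` turns it into the polynomial identity
`(b ∂_a P)² (a²(ab-σ)² + β) = (a ∂_b P)² (b²(ab-σ)² + β)`. Freeze `b = c ≠ 0` and read this in `ℂ[a]`:
the right-hand weight `c²(ca-σ)² + β` has the simple root `a = (σ + i√β/c)/c`, at which the
left-hand weight does not vanish, so the root has odd multiplicity on the right and even
multiplicity on the left unless both sides are zero. Hence both partial derivatives vanish on
`b ≠ 0`, so everywhere, and `P` is constant.
-/

namespace Polynomial

variable {R : Type*} [CommRing R]

theorem rootMultiplicity_eq_one_of_isRoot {p : R[X]} {t : R} (hroot : p.IsRoot t)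
    (hderiv : ¬ (derivative p).IsRoot t) : p.rootMultiplicity t = 1 := by
  have hp : p ≠ 0 := by rintro rfl; simp at hderiv
  have := (rootMultiplicity_pos hp).mpr hroot
  have := (one_lt_rootMultiplicity_iff_isRoot hp).not.mpr (fun h => hderiv h.2)
  omega

theorem eq_zero_of_sq_mul_eq_sq_mul [IsDomain R] {p q f g : R[X]} {z : R} (hp : ¬ p.IsRoot z)
    (hq : q.rootMultiplicity z = 1) (h : f ^ 2 * p = g ^ 2 * q) : f = 0 ∧ g = 0 := by
  have hp0 : p ≠ 0 := by rintro rfl; exact hp (by simp)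
  have hq0 : q ≠ 0 := by rintro rfl; simp at hq
  obtain rfl : g = 0 := by
    by_contra hg
    have hrhs : g ^ 2 * q ≠ 0 := mul_ne_zero (pow_ne_zero 2 hg) hq0
    have hf : f ≠ 0 := by rintro rfl; simp [← h] at hrhs
    have hmult := congrArg (rootMultiplicity z) h
    rw [rootMultiplicity_mul (h ▸ hrhs), rootMultiplicity_mul hrhs, sq, sq,
      rootMultiplicity_mul (mul_ne_zero hf hf), rootMultiplicity_mul (mul_ne_zero hg hg),
      rootMultiplicity_eq_zero hp, hq] at hmult
    omega
  rw [zero_pow two_ne_zero, zero_mul, mul_eq_zero, or_iff_left hp0] at h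
  exact ⟨pow_eq_zero_iff two_ne_zero |>.mp h, rfl⟩

end Polynomial

open Polynomial Complex in
theorem exists_simple_root_smoothed_weight {σ β c : ℝ} (hc : c ≠ 0) (hβ : 0 < β) :
    ∃ z : ℂ, ¬ (X ^ 2 * (X * C (c : ℂ) - C (σ : ℂ)) ^ 2 + C (β : ℂ)).IsRoot z ∧
      (C (c : ℂ) ^ 2 * (X * C (c : ℂ) - C (σ : ℂ)) ^ 2 + C (β : ℂ)).rootMultiplicity z = 1 := by
  set s := √β
  have hs : 0 < s := Real.sqrt_pos.mpr hβ
  have hc' : (c : ℂ) ≠ 0 := ofReal_ne_zero.mpr hc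
  set z : ℂ := ((σ / c : ℝ) : ℂ) + ((s / c ^ 2 : ℝ) : ℂ) * I with hz
  have hw : (z * c - σ) * c = s * I := by
    rw [hz]; push_cast; field_simp; ring
  have hw2 : (z * c - σ) ^ 2 * c ^ 2 = -β := by
    rw [← mul_pow, hw, mul_pow, I_sq, ← ofReal_pow, Real.sq_sqrt hβ.le]; ring
  have hw0 : z * c - σ ≠ 0 := by
    intro h0; rw [h0, zero_mul] at hw; simp [hs.ne'] at hw
  refine ⟨z, fun hroot => ?_, rootMultiplicity_eq_one_of_isRoot ?_ ?_⟩
  · simp only [IsRoot, eval_add, eval_mul, eval_pow, eval_sub, eval_X, eval_C] at hroot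
    -- the left-hand weight vanishes at `z` only if `z = ± c`, which is real
    have hzc : z ^ 2 = (c : ℂ) ^ 2 := by
      have : (z ^ 2 - c ^ 2) * (z * c - σ) ^ 2 = 0 := by linear_combination hroot - hw2
      exact sub_eq_zero.mp ((mul_eq_zero.mp this).resolve_right (pow_ne_zero 2 hw0))
    have him : z.im = 0 := by
      rcases sq_eq_sq_iff_eq_or_eq_neg.mp hzc with h | h <;> simp [h]
    rw [hz, add_im, ofReal_im, im_ofReal_mul, I_im, mul_one, zero_add] at him
    exact (div_pos hs (by positivity)).ne' him
  · simp only [IsRoot, eval_add, eval_mul, eval_pow, eval_sub, eval_X, eval_C]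
    linear_combination hw2
  · have hderiv : derivative (C (c : ℂ) ^ 2 * (X * C (c : ℂ) - C (σ : ℂ)) ^ 2 + C (β : ℂ)) =
        C (2 * (c : ℂ) ^ 2) * ((X * C (c : ℂ) - C (σ : ℂ)) * C (c : ℂ)) := by
      simp only [derivative_add, derivative_mul, derivative_pow, derivative_C, derivative_X,
        derivative_sub, map_mul, map_pow, Nat.cast_ofNat]
      ring
    rw [hderiv, IsRoot, eval_mul, eval_mul, eval_sub, eval_mul, eval_X, eval_C, eval_C, eval_C, hw]
    simp [hc, hs.ne']

namespace MvPolynomial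

theorem funext_fin_two {R : Type*} [CommRing R] [IsDomain R] [Infinite R]
    {p q : MvPolynomial (Fin 2) R} (h : ∀ a b : R, eval ![a, b] p = eval ![a, b] q) : p = q :=
  funext fun x => by rw [← FinVec.etaExpand_eq x]; exact h (x 0) (x 1)

theorem eq_zero_of_eval_eq_zero_of_ne_zero {R : Type*} [CommRing R] [IsDomain R] [Infinite R]
    {p : MvPolynomial (Fin 2) R} (h : ∀ a b : R, b ≠ 0 → eval ![a, b] p = 0) : p = 0 := by
  have hXp : X 1 * p = 0 := funext_fin_two fun a b => by
    by_cases hb : b = 0 <;> simp [hb, h]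
  exact (mul_eq_zero.mp hXp).resolve_left (X_ne_zero 1)

theorem eval_aeval_X_C {R S : Type*} [CommRing R] [CommRing S] [Algebra R S]
    (p : MvPolynomial (Fin 2) R) (a c : R) :
    (aeval ![Polynomial.X, Polynomial.C (algebraMap R S c)] p).eval (algebraMap R S a) =
      algebraMap R S (eval ![a, c] p) := by
  induction p using MvPolynomial.induction_on with
  | C r => simp [Polynomial.algebraMap_apply]
  | add p q hp hq => simp [hp, hq]
  | mul_X p i hp => fin_cases i <;> simp [hp]

theorem eq_C_of_pderiv_eq_zero {σ R : Type*} [CommRing R] [IsAddTorsionFree R]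
    {p : MvPolynomial σ R} (h : ∀ i, pderiv i p = 0) : p = C (coeff 0 p) := by
  rw [← coe_inj, coe_C]
  refine MvPowerSeries.pderiv.ext (fun i => ?_) ?_
  · simp [MvPowerSeries.pderiv_coe, h]
  · rw [← MvPowerSeries.coeff_zero_eq_constantCoeff_apply, coeff_coe,
      MvPowerSeries.constantCoeff_C]

end MvPolynomial

open MvPolynomial

section SmoothedFlow

variable {σ β : ℝ}

theorem sq_mul_eq_sq_mul_of_smoothed_invariant (hσ : σ ≠ 0) (hβ : 0 ≤ β)
    {A B : MvPolynomial (Fin 2) ℝ}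
    (h : ∀ a b : ℝ, eval ![a, b] A * (b * (a * b - σ) * √(a ^ 2 * (a * b - σ) ^ 2 + β)) +
      eval ![a, b] B * (a * (a * b - σ) * √(b ^ 2 * (a * b - σ) ^ 2 + β)) = 0) :
    (X 1 * A) ^ 2 * (X 0 ^ 2 * (X 0 * X 1 - C σ) ^ 2 + C β) =
      (X 0 * B) ^ 2 * (X 1 ^ 2 * (X 0 * X 1 - C σ) ^ 2 + C β) := by
  have hU : (X 0 * X 1 - C σ : MvPolynomial (Fin 2) ℝ) ^ 2 ≠ 0 := by
    refine pow_ne_zero 2 fun h0 => hσ ?_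
    simpa using congrArg (eval 0) h0
  refine mul_left_cancel₀ hU (funext_fin_two fun a b => ?_)
  have hs₁ := Real.sq_sqrt (by positivity : 0 ≤ a ^ 2 * (a * b - σ) ^ 2 + β)
  have hs₂ := Real.sq_sqrt (by positivity : 0 ≤ b ^ 2 * (a * b - σ) ^ 2 + β)
  simp only [map_mul, map_pow, map_sub, map_add, eval_X, eval_C, Matrix.cons_val_zero,
    Matrix.cons_val_one]
  set A₀ := eval ![a, b] A
  set B₀ := eval ![a, b] B
  linear_combination (A₀ * b * (a * b - σ) * √(a ^ 2 * (a * b - σ) ^ 2 + β) -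
      B₀ * a * (a * b - σ) * √(b ^ 2 * (a * b - σ) ^ 2 + β)) * h a b -
    (a * b - σ) ^ 2 * (b * A₀) ^ 2 * hs₁ + (a * b - σ) ^ 2 * (a * B₀) ^ 2 * hs₂

theorem eq_zero_of_smoothed_sq_mul_eq_sq_mul (hβ : 0 < β) {A B : MvPolynomial (Fin 2) ℝ}
    (h : (X 1 * A) ^ 2 * (X 0 ^ 2 * (X 0 * X 1 - C σ) ^ 2 + C β) =
      (X 0 * B) ^ 2 * (X 1 ^ 2 * (X 0 * X 1 - C σ) ^ 2 + C β)) :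
    A = 0 ∧ B = 0 := by
  have hvanish (a c : ℝ) (hc : c ≠ 0) : eval ![a, c] A = 0 ∧ eval ![a, c] B = 0 := by
    let φ := aeval (R := ℝ) ![(Polynomial.X : Polynomial ℂ), Polynomial.C (c : ℂ)]
    have hφ := congrArg φ h
    simp only [φ, map_mul, map_pow, map_add, map_sub, aeval_X, aeval_C, Matrix.cons_val_zero,
      Matrix.cons_val_one, Polynomial.algebraMap_apply, Complex.coe_algebraMap] at hφ
    obtain ⟨z, hp, hq⟩ := exists_simple_root_smoothed_weight (σ := σ) hc hβ
    obtain ⟨hA, hB⟩ := Polynomial.eq_zero_of_sq_mul_eq_sq_mul hp hq hφ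
    rw [mul_eq_zero, or_iff_right (by simpa using hc)] at hA
    rw [mul_eq_zero, or_iff_right Polynomial.X_ne_zero] at hB
    constructor
    · simpa [hA] using (eval_aeval_X_C (S := ℂ) A a c).symm
    · simpa [hB] using (eval_aeval_X_C (S := ℂ) B a c).symm
  exact ⟨eq_zero_of_eval_eq_zero_of_ne_zero fun a c hc => (hvanish a c hc).1,
    eq_zero_of_eval_eq_zero_of_ne_zero fun a c hc => (hvanish a c hc).2⟩

end SmoothedFlow

/-- For fixed reals `σ ≠ 0` and `β > 0`, the scalar β-smoothed spectral gradient
flow for the loss `(1/2)(ab − σ)²` admits no non-constant polynomial invariant: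
if `P ∈ ℝ[a,b]` satisfies, identically on `ℝ²`,
`∂_a P · b(ab−σ)·√(a²(ab−σ)²+β) + ∂_b P · a(ab−σ)·√(b²(ab−σ)²+β) = 0`,
then `P` is constant. -/
theorem no_polynomial_invariant_smoothed (σ β : ℝ) (hσ : σ ≠ 0) (hβ : 0 < β)
    (P : MvPolynomial (Fin 2) ℝ)
    (hinv : ∀ a b : ℝ,
      eval ![a, b] (pderiv (0 : Fin 2) P) *
        (b * (a * b - σ) * Real.sqrt (a ^ 2 * (a * b - σ) ^ 2 + β)) +
      eval ![a, b] (pderiv (1 : Fin 2) P) *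
        (a * (a * b - σ) * Real.sqrt (b ^ 2 * (a * b - σ) ^ 2 + β)) = 0) :
    ∃ c : ℝ, P = C c := by
  obtain ⟨h₀, h₁⟩ := eq_zero_of_smoothed_sq_mul_eq_sq_mul hβ
    (sq_mul_eq_sq_mul_of_smoothed_invariant hσ hβ.le hinv)
  refine ⟨coeff 0 P, eq_C_of_pderiv_eq_zero fun i => ?_⟩
  fin_cases i
  exacts [h₀, h₁]
end

section
/- Let σ ≠ 0 be real and let O = {(a,b) ∈ ℝ² : a ≠ 0, b ≠ 0, ab ≠ σ}. If P ∈ ℝ[a,b] satisfies ∂_a P(a,b)·sgn(b(ab−σ)) + ∂_b P(a,b)·sgn(a(ab−σ)) = 0 for all (a,b) ∈ O, then P is constant. Consequently, the scalar sign-normalized gradient flow for the loss (1/2)(ab−σ)² admits no non-constant polynomial invariant on O. -/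
open MvPolynomial

-- coefficient formula for pderiv
lemma coeff_pderiv' (i : Fin 2) (m : Fin 2 →₀ ℕ) (P : MvPolynomial (Fin 2) ℝ) :
    coeff m (pderiv i P) = (m i + 1 : ℝ) * coeff (m + Finsupp.single i 1) P := by
  induction P using MvPolynomial.induction_on' with
  | monomial s a =>
    rw [pderiv_monomial, coeff_monomial, coeff_monomial]
    by_cases hs : s = m + Finsupp.single i 1
    · subst hs
      have h1 : m + Finsupp.single i 1 - Finsupp.single i 1 = m := add_tsub_cancel_right _ _
      have h2 : ((m + Finsupp.single i 1 : Fin 2 →₀ ℕ)) i = m i + 1 := by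
        simp
      rw [if_pos h1, if_pos rfl, h2]
      push_cast
      ring
    · rw [if_neg hs, mul_zero]
      by_cases hsi : s i = 0
      · split <;> simp [hsi]
      · have hle : Finsupp.single i 1 ≤ s := by
          rw [Finsupp.single_le_iff]; omega
        have : s - Finsupp.single i 1 ≠ m := by
          intro h
          apply hs
          rw [← h, tsub_add_cancel_of_le hle]
        rw [if_neg this]
  | add p q hp hq =>
    simp [map_add, coeff_add, hp, hq, mul_add]

lemma const_of_pderiv_zero (P : MvPolynomial (Fin 2) ℝ)
    (h : ∀ i, pderiv i P = 0) : ∃ c : ℝ, P = C c := by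
  refine ⟨coeff 0 P, ?_⟩
  ext m
  by_cases hm : m = 0
  · subst hm; simp
  · rw [coeff_C, if_neg (fun h' => hm h'.symm)]
    obtain ⟨i, hi⟩ : ∃ i, m i ≠ 0 := by
      by_contra hc
      push_neg at hc
      exact hm (Finsupp.ext fun i => hc i)
    set m' := m - Finsupp.single i 1 with hm'
    have hle : Finsupp.single i 1 ≤ m := by
      rw [Finsupp.single_le_iff]; omega
    have hmm : m' + Finsupp.single i 1 = m := tsub_add_cancel_of_le hle
    have := coeff_pderiv' i m' P
    rw [h i, coeff_zero, hmm] at this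
    have hpos : (m' i + 1 : ℝ) ≠ 0 := by positivity
    exact (mul_eq_zero.mp this.symm).resolve_left hpos

-- vanishing on product of infinite sets implies zero
lemma zero_of_vanish (S : MvPolynomial (Fin 2) ℝ) (sA sB : Set ℝ)
    (hA : sA.Infinite) (hB : sB.Infinite)
    (h : ∀ a ∈ sA, ∀ b ∈ sB, eval ![a, b] S = 0) : S = 0 := by
  have key : ∀ (a b : ℝ), Polynomial.eval b
      (MvPolynomial.aeval ![Polynomial.C a, Polynomial.X] S) = eval ![a, b] S := by
    intro a b
    rw [MvPolynomial.aeval_def,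
      show Polynomial.eval b = ⇑(Polynomial.evalRingHom b) from rfl,
      MvPolynomial.eval₂_comp_left (Polynomial.evalRingHom b)]
    rw [show MvPolynomial.eval ![a,b] = MvPolynomial.eval₂ (RingHom.id ℝ) ![a,b] from rfl]
    congr 1
    · ext x; simp
    · funext i; fin_cases i <;> simp
  -- step 1: for each a in sA, vanishes for all b
  have step1 : ∀ a ∈ sA, ∀ b : ℝ, eval ![a, b] S = 0 := by
    intro a ha b
    have hz : (MvPolynomial.aeval ![Polynomial.C a, Polynomial.X] S : Polynomial ℝ) = 0 := by
      apply Polynomial.eq_zero_of_infinite_isRoot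
      apply Set.Infinite.mono _ hB
      intro b hb
      simp only [Set.mem_setOf_eq, Polynomial.IsRoot]
      rw [key a b]; exact h a ha b hb
    rw [← key a b, hz, Polynomial.eval_zero]
  -- step 2: everywhere
  have key2 : ∀ (a b : ℝ), Polynomial.eval a
      (MvPolynomial.aeval ![Polynomial.X, Polynomial.C b] S) = eval ![a, b] S := by
    intro a b
    rw [MvPolynomial.aeval_def,
      show Polynomial.eval a = ⇑(Polynomial.evalRingHom a) from rfl,
      MvPolynomial.eval₂_comp_left (Polynomial.evalRingHom a)]
    rw [show MvPolynomial.eval ![a,b] = MvPolynomial.eval₂ (RingHom.id ℝ) ![a,b] from rfl]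
    congr 1
    · ext x; simp
    · funext i; fin_cases i <;> simp
  have step2 : ∀ a b : ℝ, eval ![a, b] S = 0 := by
    intro a b
    have hz : (MvPolynomial.aeval ![Polynomial.X, Polynomial.C b] S : Polynomial ℝ) = 0 := by
      apply Polynomial.eq_zero_of_infinite_isRoot
      apply Set.Infinite.mono _ hA
      intro a' ha'
      simp only [Set.mem_setOf_eq, Polynomial.IsRoot]
      rw [key2 a' b]; exact step1 a' ha' b
    rw [← key2 a b, hz, Polynomial.eval_zero]
  apply MvPolynomial.funext
  intro x
  have hx : x = ![x 0, x 1] := by funext i; fin_cases i <;> rfl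
  rw [hx] at *
  simp [step2 (x 0) (x 1)]


/-- For a fixed real `σ ≠ 0`, let `O = {(a,b) : a ≠ 0, b ≠ 0, ab ≠ σ}`.  If a
polynomial `P ∈ ℝ[a,b]` satisfies
`∂_a P · sgn(b(ab−σ)) + ∂_b P · sgn(a(ab−σ)) = 0` on `O`, then `P` is constant;
i.e. the scalar sign-normalized gradient flow for `(1/2)(ab−σ)²` admits no
non-constant polynomial invariant on `O`. -/
theorem no_polynomial_invariant_sign (σ : ℝ) (hσ : σ ≠ 0)
    (P : MvPolynomial (Fin 2) ℝ)
    (hinv : ∀ a b : ℝ, a ≠ 0 → b ≠ 0 → a * b ≠ σ →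
      eval ![a, b] (pderiv (0 : Fin 2) P) * Real.sign (b * (a * b - σ)) +
      eval ![a, b] (pderiv (1 : Fin 2) P) * Real.sign (a * (a * b - σ)) = 0) :
    ∃ c : ℝ, P = C c := by
  set Q := pderiv (0 : Fin 2) P with hQdef
  set R := pderiv (1 : Fin 2) P with hRdef
  have habs : (0:ℝ) < |σ| := abs_pos.mpr hσ
  -- Q + R = 0
  have hQR : Q + R = 0 := by
    apply zero_of_vanish _ (Set.Ioi |σ|) (Set.Ioi 1) (Set.Ioi_infinite _) (Set.Ioi_infinite _)
    intro a ha b hb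
    rw [Set.mem_Ioi] at ha hb
    have ha0 : (0:ℝ) < a := lt_trans habs ha
    have hb0 : (0:ℝ) < b := lt_trans one_pos hb
    have hab : σ < a * b := by nlinarith [le_abs_self σ]
    have h1 : Real.sign (b * (a * b - σ)) = 1 :=
      Real.sign_of_pos (by nlinarith)
    have h2 : Real.sign (a * (a * b - σ)) = 1 :=
      Real.sign_of_pos (by nlinarith)
    have := hinv a b (ne_of_gt ha0) (ne_of_gt hb0) (ne_of_gt hab)
    rw [h1, h2] at this
    simp only [map_add]
    linarith
  -- Q - R = 0
  have hQR' : Q - R = 0 := by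
    apply zero_of_vanish _ (Set.Ioi |σ|) (Set.Iio (-1)) (Set.Ioi_infinite _) (Set.Iio_infinite _)
    intro a ha b hb
    rw [Set.mem_Ioi] at ha
    rw [Set.mem_Iio] at hb
    have ha0 : (0:ℝ) < a := lt_trans habs ha
    have hb0 : b < 0 := lt_trans hb (by norm_num)
    have hab : a * b < σ := by nlinarith [neg_abs_le σ]
    have h1 : Real.sign (b * (a * b - σ)) = 1 :=
      Real.sign_of_pos (by nlinarith)
    have h2 : Real.sign (a * (a * b - σ)) = -1 :=
      Real.sign_of_neg (by nlinarith)
    have := hinv a b (ne_of_gt ha0) (ne_of_lt hb0) (ne_of_lt hab)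
    rw [h1, h2] at this
    simp only [map_sub]
    linarith
  have hRneg : R = -Q := eq_neg_of_add_eq_zero_right hQR
  have hQ0 : Q = 0 := by
    rw [hRneg, sub_neg_eq_add] at hQR'
    exact add_self_eq_zero.mp hQR'
  have hR0 : R = 0 := by rw [hRneg, hQ0, neg_zero]
  apply const_of_pderiv_zero
  intro i
  fin_cases i
  · exact hQ0
  · exact hR0
end

section
/- Let σ > 0, β > 0, and consider the ODE system on ℝ²: ȧ = −f_β((ab−σ)b), ḃ = −f_β((ab−σ)a), where f_β(x) = x/√(x²+β). Suppose a(0) ≥ 0, b(0) ≥ 0, not both zero, and a(0)b(0) < σ. Then along any solution, the product p(t) = a(t)b(t) is non-decreasing and satisfies a(t)b(t) ≤ σ for all t ≥ 0; moreover a(t) and b(t) remain nonnegative and are bounded. -/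
open Set Filter Topology

/-- `f_β(x) = x / √(x² + β)`. -/
noncomputable def fbeta (β x : ℝ) : ℝ := x / Real.sqrt (x ^ 2 + β)

lemma fbeta_nonpos {β x : ℝ} (hx : x ≤ 0) : fbeta β x ≤ 0 :=
  div_nonpos_of_nonpos_of_nonneg hx (Real.sqrt_nonneg _)

lemma fbeta_neg_of_neg {β x : ℝ} (hβ : 0 < β) (hx : x < 0) : fbeta β x < 0 :=
  div_neg_of_neg_of_pos hx (Real.sqrt_pos.2 (by positivity))

lemma fbeta_neg (β x : ℝ) : fbeta β (-x) = -fbeta β x := by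
  simp [fbeta, neg_div, neg_sq]

lemma fbeta_le {β x : ℝ} (hβ : 0 < β) (hx : 0 ≤ x) : fbeta β x ≤ x / Real.sqrt β := by
  unfold fbeta
  apply div_le_div_of_nonneg_left hx (Real.sqrt_pos.2 hβ)
  exact Real.sqrt_le_sqrt (by nlinarith)

lemma term_bound {β c x M : ℝ} (hβ : 0 < β) (hc : 0 ≤ c) (hx : 0 ≤ x) (hxM : x ≤ M) :
    fbeta β (c * x) * x ≤ c * M ^ 2 / Real.sqrt β := by
  have hs : 0 < Real.sqrt β := Real.sqrt_pos.2 hβ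
  have h1 : fbeta β (c * x) ≤ c * x / Real.sqrt β := fbeta_le hβ (mul_nonneg hc hx)
  have h2 : fbeta β (c * x) * x ≤ (c * x / Real.sqrt β) * x :=
    mul_le_mul_of_nonneg_right h1 hx
  have h3 : (c * x / Real.sqrt β) * x ≤ c * M ^ 2 / Real.sqrt β := by
    rw [div_mul_eq_mul_div]
    apply div_le_div_of_nonneg_right ?_ hs.le
    nlinarith [mul_le_mul hxM hxM hx (hx.trans hxM)]
  linarith

lemma monoOn_Icc_aux {f f' : ℝ → ℝ} {s t : ℝ} (hs : 0 ≤ s)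
    (hf : ∀ u ∈ Ici (0:ℝ), HasDerivWithinAt f (f' u) (Ici 0) u)
    (h0 : ∀ u ∈ Ioo s t, 0 ≤ f' u) : MonotoneOn f (Icc s t) := by
  have hsub : Icc s t ⊆ Ici (0:ℝ) := fun u hu => le_trans hs hu.1
  have hsub2 : interior (Icc s t) ⊆ Ici (0:ℝ) := interior_subset.trans hsub
  apply monotoneOn_of_hasDerivWithinAt_nonneg (convex_Icc s t) (f' := f')
  · exact fun u hu => ((hf u (hsub hu)).continuousWithinAt).mono hsub
  · exact fun u hu => (hf u (hsub2 hu)).mono hsub2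
  · intro u hu
    rw [interior_Icc] at hu
    exact h0 u hu

lemma aux_flow (σ β : ℝ) (hσ : 0 < σ) (hβ : 0 < β) (a b : ℝ → ℝ)
    (ha : ∀ t ∈ Ici (0 : ℝ),
      HasDerivWithinAt a (-(fbeta β ((a t * b t - σ) * b t))) (Ici 0) t)
    (hb : ∀ t ∈ Ici (0 : ℝ),
      HasDerivWithinAt b (-(fbeta β ((a t * b t - σ) * a t))) (Ici 0) t)
    (ha0 : 0 ≤ a 0) (hb0 : 0 < b 0) (hab0 : a 0 * b 0 < σ) :
    MonotoneOn (fun t => a t * b t) (Ici 0) ∧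
    (∀ t ∈ Ici (0 : ℝ), a t * b t ≤ σ) ∧
    (∀ t ∈ Ici (0 : ℝ), 0 ≤ a t ∧ 0 ≤ b t) ∧
    (∃ C : ℝ, ∀ t ∈ Ici (0 : ℝ), a t ≤ C ∧ b t ≤ C) := by
  -- pointwise sign facts for the vector field
  have hA' : ∀ u : ℝ, 0 ≤ b u → a u * b u ≤ σ →
      0 ≤ -(fbeta β ((a u * b u - σ) * b u)) := by
    intro u h1 h2
    have := fbeta_nonpos (β := β)
      (mul_nonpos_iff.2 (Or.inr ⟨sub_nonpos.2 h2, h1⟩))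
    linarith
  have hB' : ∀ u : ℝ, 0 ≤ a u → a u * b u ≤ σ →
      0 ≤ -(fbeta β ((a u * b u - σ) * a u)) := by
    intro u h1 h2
    have := fbeta_nonpos (β := β)
      (mul_nonpos_iff.2 (Or.inr ⟨sub_nonpos.2 h2, h1⟩))
    linarith
  -- strict gap lemma (Gronwall-type barrier)
  have gap : ∀ T : ℝ, 0 ≤ T →
      (∀ s ∈ Icc (0:ℝ) T, 0 ≤ a s ∧ 0 ≤ b s ∧ a s * b s ≤ σ) → a T * b T < σ := by
    intro T hT hP
    have hmonoa : MonotoneOn a (Icc 0 T) := by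
      apply monoOn_Icc_aux le_rfl ha
      intro u hu
      have h := hP u (Ioo_subset_Icc_self hu)
      exact hA' u h.2.1 h.2.2
    have hmonob : MonotoneOn b (Icc 0 T) := by
      apply monoOn_Icc_aux le_rfl hb
      intro u hu
      have h := hP u (Ioo_subset_Icc_self hu)
      exact hB' u h.1 h.2.2
    set M := max (a T) (b T) with hM
    have hTmem : T ∈ Icc (0:ℝ) T := ⟨hT, le_rfl⟩
    have hMa : ∀ s ∈ Icc (0:ℝ) T, a s ≤ M :=
      fun s hs => (hmonoa hs hTmem hs.2).trans (le_max_left _ _)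
    have hMb : ∀ s ∈ Icc (0:ℝ) T, b s ≤ M :=
      fun s hs => (hmonob hs hTmem hs.2).trans (le_max_right _ _)
    set K := 2 * M ^ 2 / Real.sqrt β with hK
    set q := fun u => -(fbeta β ((a u * b u - σ) * b u)) * b u +
        a u * -(fbeta β ((a u * b u - σ) * a u)) with hq
    have hpq : ∀ u ∈ Ici (0:ℝ),
        HasDerivWithinAt (fun t => a t * b t) (q u) (Ici 0) u :=
      fun u hu => (ha u hu).mul (hb u hu)
    have hqle : ∀ u ∈ Icc (0:ℝ) T, q u ≤ (σ - a u * b u) * K := by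
      intro u hu
      obtain ⟨h1, h2, h3⟩ := hP u hu
      have e1 : (a u * b u - σ) * b u = -((σ - a u * b u) * b u) := by ring
      have e2 : (a u * b u - σ) * a u = -((σ - a u * b u) * a u) := by ring
      have t1 : fbeta β ((σ - a u * b u) * b u) * b u ≤
          (σ - a u * b u) * M ^ 2 / Real.sqrt β :=
        term_bound hβ (by linarith) h2 (hMb u hu)
      have t2 : fbeta β ((σ - a u * b u) * a u) * a u ≤
          (σ - a u * b u) * M ^ 2 / Real.sqrt β :=
        term_bound hβ (by linarith) h1 (hMa u hu)
      have hqeq : q u = fbeta β ((σ - a u * b u) * b u) * b u +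
          fbeta β ((σ - a u * b u) * a u) * a u := by
        rw [hq]
        simp only
        rw [e1, e2, fbeta_neg, fbeta_neg]
        ring
      rw [hqeq, hK]
      calc fbeta β ((σ - a u * b u) * b u) * b u +
            fbeta β ((σ - a u * b u) * a u) * a u
          ≤ (σ - a u * b u) * M ^ 2 / Real.sqrt β +
            (σ - a u * b u) * M ^ 2 / Real.sqrt β := add_le_add t1 t2
        _ = (σ - a u * b u) * (2 * M ^ 2 / Real.sqrt β) := by ring
    set v := fun s => (σ - a s * b s) * Real.exp (K * s) with hv
    have hv' : ∀ u ∈ Ici (0:ℝ), HasDerivWithinAt v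
        (-(q u) * Real.exp (K * u) + (σ - a u * b u) * (Real.exp (K * u) * K))
        (Ici 0) u := by
      intro u hu
      have hexp : HasDerivWithinAt (fun s => Real.exp (K * s))
          (Real.exp (K * u) * K) (Ici 0) u := by
        have h := ((hasDerivAt_id u).const_mul K).exp
        simpa using h.hasDerivWithinAt
      have H := ((hasDerivWithinAt_const u (Ici (0:ℝ)) σ).sub (hpq u hu)).mul hexp
      refine H.congr_deriv ?_
      simp only [Pi.sub_apply]
      ring
    have hvmono : MonotoneOn v (Icc 0 T) := by
      apply monoOn_Icc_aux le_rfl hv'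
      intro u hu
      have hu' := Ioo_subset_Icc_self hu
      have h3 := hqle u hu'
      have he := Real.exp_pos (K * u)
      nlinarith [mul_nonneg (sub_nonneg.2 h3) he.le]
    have h0T : v 0 ≤ v T := hvmono ⟨le_rfl, hT⟩ hTmem hT
    have hv0 : 0 < v 0 := by
      rw [hv]
      have h1 : (0:ℝ) < σ - a 0 * b 0 := by linarith
      positivity
    have hvT : 0 < v T := lt_of_lt_of_le hv0 h0T
    rw [hv] at hvT
    simp only at hvT
    nlinarith [Real.exp_pos (K * T)]
  -- extension step
  have extend : ∀ T : ℝ, 0 ≤ T →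
      (∀ s ∈ Icc (0:ℝ) T, 0 ≤ a s ∧ 0 ≤ b s ∧ a s * b s ≤ σ) →
      ∃ ε > 0, ∀ s ∈ Icc (0:ℝ) (T + ε), 0 ≤ a s ∧ 0 ≤ b s ∧ a s * b s ≤ σ := by
    intro T hT hP
    have hgap : a T * b T < σ := gap T hT hP
    have hbT : 0 < b T := by
      have hmonob : MonotoneOn b (Icc 0 T) := by
        apply monoOn_Icc_aux le_rfl hb
        intro u hu
        have h := hP u (Ioo_subset_Icc_self hu)
        exact hB' u h.1 h.2.2
      exact lt_of_lt_of_le hb0 (hmonob ⟨le_rfl, hT⟩ ⟨hT, le_rfl⟩ hT)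
    have cw : ContinuousWithinAt (fun s => a s * b s) (Ici 0) T :=
      ((ha T hT).continuousWithinAt).mul ((hb T hT).continuousWithinAt)
    have cb : ContinuousWithinAt b (Ici 0) T := (hb T hT).continuousWithinAt
    have hev : ∀ᶠ s in 𝓝[Ici (0:ℝ)] T, a s * b s < σ ∧ 0 < b s :=
      (cw.eventually_lt_const hgap).and (cb.eventually_const_lt hbT)
    obtain ⟨δ, hδ, hsubδ⟩ := Metric.mem_nhdsWithin_iff.1 hev
    refine ⟨δ / 2, by positivity, ?_⟩
    have hloc : ∀ s ∈ Icc T (T + δ / 2), a s * b s < σ ∧ 0 < b s := by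
      intro s hs
      apply hsubδ
      constructor
      · rw [Metric.mem_ball, Real.dist_eq, abs_of_nonneg (by linarith [hs.1])]
        linarith [hs.2]
      · exact le_trans hT hs.1
    have hmonoa2 : MonotoneOn a (Icc T (T + δ / 2)) := by
      apply monoOn_Icc_aux hT ha
      intro u hu
      have h := hloc u (Ioo_subset_Icc_self hu)
      exact hA' u h.2.le h.1.le
    intro s hs
    rcases le_or_gt s T with h | h
    · exact hP s ⟨hs.1, h⟩
    · have hs' : s ∈ Icc T (T + δ / 2) := ⟨h.le, hs.2⟩
      obtain ⟨hps, hbs⟩ := hloc s hs'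
      refine ⟨?_, hbs.le, hps.le⟩
      have hTs : a T ≤ a s := hmonoa2 ⟨le_rfl, by linarith⟩ hs' h.le
      exact le_trans (hP T ⟨hT, le_rfl⟩).1 hTs
  -- continuous induction
  have hBall : ∀ t : ℝ, 0 ≤ t →
      ∀ s ∈ Icc (0:ℝ) t, 0 ≤ a s ∧ 0 ≤ b s ∧ a s * b s ≤ σ := by
    by_contra hcon
    push_neg at hcon
    obtain ⟨T, hT, s0, hs0, hbad⟩ := hcon
    set B : Set ℝ := {t | 0 ≤ t ∧
      ∀ s ∈ Icc (0:ℝ) t, 0 ≤ a s ∧ 0 ≤ b s ∧ a s * b s ≤ σ} with hBdef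
    have h0B : (0:ℝ) ∈ B := by
      refine ⟨le_rfl, ?_⟩
      intro s hs
      have hs0' : s = 0 := le_antisymm hs.2 hs.1
      rw [hs0']
      exact ⟨ha0, hb0.le, hab0.le⟩
    have hub : ∀ u ∈ B, u ≤ T := by
      intro u hu
      by_contra hcu
      push_neg at hcu
      have h := hu.2 s0 ⟨hs0.1, hs0.2.trans hcu.le⟩
      have := hbad h.1 h.2.1
      linarith [h.2.2]
    have hbdd : BddAbove B := ⟨T, hub⟩
    set c := sSup B with hc
    have hc0 : 0 ≤ c := le_csSup hbdd h0B
    have hPlt : ∀ s : ℝ, 0 ≤ s → s < c → 0 ≤ a s ∧ 0 ≤ b s ∧ a s * b s ≤ σ := by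
      intro s hs hsc
      obtain ⟨u, huB, hsu⟩ := exists_lt_of_lt_csSup ⟨0, h0B⟩ hsc
      exact huB.2 s ⟨hs, hsu.le⟩
    have hcB : c ∈ B := by
      refine ⟨hc0, ?_⟩
      intro s hs
      rcases lt_or_eq_of_le hs.2 with h | h
      · exact hPlt s hs.1 h
      · rw [h]
        rcases eq_or_lt_of_le hc0 with h0 | h0
        · rw [← h0]
          exact ⟨ha0, hb0.le, hab0.le⟩
        · have hneb : (𝓝[Ico (0:ℝ) c] c).NeBot := by
            apply mem_closure_iff_nhdsWithin_neBot.1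
            rw [closure_Ico h0.ne]
            exact ⟨hc0, le_rfl⟩
          have hmemc : c ∈ Ici (0:ℝ) := hc0
          have hta : Tendsto a (𝓝[Ico (0:ℝ) c] c) (𝓝 (a c)) :=
            ((ha c hmemc).continuousWithinAt).mono_left
              (nhdsWithin_mono _ (fun x hx => hx.1))
          have htb : Tendsto b (𝓝[Ico (0:ℝ) c] c) (𝓝 (b c)) :=
            ((hb c hmemc).continuousWithinAt).mono_left
              (nhdsWithin_mono _ (fun x hx => hx.1))
          have htp : Tendsto (fun s => a s * b s) (𝓝[Ico (0:ℝ) c] c)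
              (𝓝 (a c * b c)) := hta.mul htb
          have hevP : ∀ᶠ s in 𝓝[Ico (0:ℝ) c] c,
              0 ≤ a s ∧ 0 ≤ b s ∧ a s * b s ≤ σ := by
            filter_upwards [self_mem_nhdsWithin] with s hsm
            exact hPlt s hsm.1 hsm.2
          exact ⟨ge_of_tendsto hta (hevP.mono fun s h => h.1),
            ge_of_tendsto htb (hevP.mono fun s h => h.2.1),
            le_of_tendsto htp (hevP.mono fun s h => h.2.2)⟩
    obtain ⟨ε, hε, hPε⟩ := extend c hc0 hcB.2
    have hcε : c + ε ∈ B := ⟨by linarith, hPε⟩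
    have := le_csSup hbdd hcε
    linarith
  have key : ∀ t ∈ Ici (0:ℝ), 0 ≤ a t ∧ 0 ≤ b t ∧ a t * b t ≤ σ :=
    fun t ht => hBall t ht t ⟨ht, le_rfl⟩
  -- global monotonicity of a and b
  have monoA : MonotoneOn a (Ici 0) := by
    apply monotoneOn_of_hasDerivWithinAt_nonneg (convex_Ici 0)
      (f' := fun u => -(fbeta β ((a u * b u - σ) * b u)))
    · exact fun u hu => (ha u hu).continuousWithinAt
    · exact fun u hu => (ha u (interior_subset hu)).mono interior_subset
    · intro u hu
      have h := key u (interior_subset hu)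
      exact hA' u h.2.1 h.2.2
  have monoB : MonotoneOn b (Ici 0) := by
    apply monotoneOn_of_hasDerivWithinAt_nonneg (convex_Ici 0)
      (f' := fun u => -(fbeta β ((a u * b u - σ) * a u)))
    · exact fun u hu => (hb u hu).continuousWithinAt
    · exact fun u hu => (hb u (interior_subset hu)).mono interior_subset
    · intro u hu
      have h := key u (interior_subset hu)
      exact hB' u h.1 h.2.2
  have hbpos : ∀ t ∈ Ici (0:ℝ), 0 < b t :=
    fun t ht => lt_of_lt_of_le hb0 (monoB self_mem_Ici ht ht)
  -- strict monotonicity of a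
  have strictA : StrictMonoOn a (Ici 0) := by
    apply strictMonoOn_of_hasDerivWithinAt_pos (convex_Ici 0)
      (f' := fun u => -(fbeta β ((a u * b u - σ) * b u)))
    · exact fun u hu => (ha u hu).continuousWithinAt
    · exact fun u hu => (ha u (interior_subset hu)).mono interior_subset
    · intro u hu
      rw [interior_Ici] at hu
      have hu' : (0:ℝ) ≤ u := hu.le
      have hgap : a u * b u < σ := gap u hu' (fun s hs => hBall u hu' s hs)
      have hbu : 0 < b u := hbpos u hu'
      have harg : (a u * b u - σ) * b u < 0 :=
        mul_neg_of_neg_of_pos (by linarith) hbu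
      have := fbeta_neg_of_neg hβ harg
      linarith
  have hA1 : 0 < a 1 :=
    lt_of_le_of_lt ha0 (strictA self_mem_Ici (by norm_num) (by norm_num))
  refine ⟨?_, fun t ht => (key t ht).2.2,
    fun t ht => ⟨(key t ht).1, (key t ht).2.1⟩, ?_⟩
  · intro s hs t ht hst
    exact mul_le_mul (monoA hs ht hst) (monoB hs ht hst)
      (key s hs).2.1 (key t ht).1
  · refine ⟨max (σ / b 0) (max (b 1) (σ / a 1)), ?_⟩
    intro t ht
    constructor
    · have h1 : a t * b 0 ≤ σ := by
        calc a t * b 0 ≤ a t * b t :=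
              mul_le_mul_of_nonneg_left (monoB self_mem_Ici ht ht) (key t ht).1
          _ ≤ σ := (key t ht).2.2
      exact ((le_div_iff₀ hb0).2 h1).trans (le_max_left _ _)
    · rcases le_or_gt t 1 with h | h
      · have hbt : b t ≤ b 1 := monoB ht (by norm_num) h
        exact hbt.trans ((le_max_left _ _).trans (le_max_right _ _))
      · have ha1t : a 1 ≤ a t := monoA (by norm_num) ht h.le
        have h1 : b t * a 1 ≤ σ := by
          calc b t * a 1 ≤ b t * a t :=
                mul_le_mul_of_nonneg_left ha1t (key t ht).2.1
            _ = a t * b t := mul_comm _ _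
            _ ≤ σ := (key t ht).2.2
        exact ((le_div_iff₀ hA1).2 h1).trans
          ((le_max_right _ _).trans (le_max_right _ _))

/-- Scalar smoothed spectral gradient flow `ȧ = −f_β((ab−σ)b)`,
`ḃ = −f_β((ab−σ)a)` for the loss `(1/2)(ab−σ)²`, with `a(0), b(0) ≥ 0` not both
zero and `a(0)b(0) < σ`: the product `ab` is non-decreasing on `[0,∞)` and stays
`≤ σ`, `a` and `b` remain nonnegative, and both are bounded. -/
theorem scalar_smoothed_flow_product_monotone (σ β : ℝ) (hσ : 0 < σ) (hβ : 0 < β)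
    (a b : ℝ → ℝ)
    (ha : ∀ t ∈ Ici (0 : ℝ),
      HasDerivWithinAt a (-(fbeta β ((a t * b t - σ) * b t))) (Ici 0) t)
    (hb : ∀ t ∈ Ici (0 : ℝ),
      HasDerivWithinAt b (-(fbeta β ((a t * b t - σ) * a t))) (Ici 0) t)
    (ha0 : 0 ≤ a 0) (hb0 : 0 ≤ b 0) (hne : ¬(a 0 = 0 ∧ b 0 = 0))
    (hab0 : a 0 * b 0 < σ) :
    MonotoneOn (fun t => a t * b t) (Ici 0) ∧
    (∀ t ∈ Ici (0 : ℝ), a t * b t ≤ σ) ∧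
    (∀ t ∈ Ici (0 : ℝ), 0 ≤ a t ∧ 0 ≤ b t) ∧
    (∃ C : ℝ, ∀ t ∈ Ici (0 : ℝ), a t ≤ C ∧ b t ≤ C) := by
  rcases eq_or_lt_of_le hb0 with h | h
  · -- b 0 = 0, hence a 0 > 0; apply the aux lemma with roles swapped
    have ha0' : 0 < a 0 := by
      rcases eq_or_lt_of_le ha0 with h2 | h2
      · exact absurd ⟨h2.symm, h.symm⟩ hne
      · exact h2
    have hb' : ∀ t ∈ Ici (0 : ℝ),
        HasDerivWithinAt b (-(fbeta β ((b t * a t - σ) * a t))) (Ici 0) t := by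
      intro t ht
      have h2 := hb t ht
      rwa [mul_comm (a t) (b t)] at h2
    have ha' : ∀ t ∈ Ici (0 : ℝ),
        HasDerivWithinAt a (-(fbeta β ((b t * a t - σ) * b t))) (Ici 0) t := by
      intro t ht
      have h2 := ha t ht
      rwa [mul_comm (a t) (b t)] at h2
    obtain ⟨m, h1, h2, C, h3⟩ := aux_flow σ β hσ hβ b a hb' ha' h.le ha0'
      (by rw [mul_comm]; exact hab0)
    refine ⟨?_, ?_, ?_, C, ?_⟩
    · have he : (fun t => b t * a t) = fun t => a t * b t :=
        funext fun t => mul_comm _ _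
      rwa [he] at m
    · intro t ht; rw [mul_comm]; exact h1 t ht
    · intro t ht; exact ⟨(h2 t ht).2, (h2 t ht).1⟩
    · intro t ht; exact ⟨(h3 t ht).2, (h3 t ht).1⟩
  · exact aux_flow σ β hσ hβ a b ha hb ha0 h hab0
end

section
/- Consider the nuclear-norm descent identity for spectral gradient flow: if A(t), B(t) evolve by Ȧ = −T(∇_A L) and Ḃ = −T(∇_B L) for the loss L(A,B) = (1/2)‖AB − Y‖_F², where T is exact orthogonalization, then dL/dt = −‖∇_A L‖_* − ‖∇_B L‖_* ≤ 0, with equality if and only if ∇_A L = 0 and ∇_B L = 0. -/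
open Matrix

/-- Nuclear norm of a real matrix: `‖X‖_* = tr ((X Xᴴ)^{1/2})`, equal to the sum
of the singular values of `X`. -/
noncomputable def nuclearNorm {m n : Type*} [Fintype m] [Fintype n] [DecidableEq m]
    (X : Matrix m n ℝ) : ℝ :=
  ((Matrix.isHermitian_mul_conjTranspose_self X).eigenvectorUnitary.1 *
    Matrix.diagonal ((RCLike.ofReal : ℝ → ℝ) ∘ Real.sqrt ∘ (Matrix.isHermitian_mul_conjTranspose_self X).eigenvalues) *
    (star (Matrix.isHermitian_mul_conjTranspose_self X).eigenvectorUnitary : Matrix m m ℝ)).trace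

/-- `P` is the exact orthogonalization `T(X) = U Vᵀ` coming from a compact SVD
`X = U (diag σ) Vᵀ` with positive singular values. -/
def IsOrthogonalization {m n : ℕ} (X P : Matrix (Fin m) (Fin n) ℝ) : Prop :=
  ∃ (k : ℕ) (U : Matrix (Fin m) (Fin k) ℝ) (V : Matrix (Fin n) (Fin k) ℝ)
    (σ : Fin k → ℝ),
    Uᵀ * U = 1 ∧ Vᵀ * V = 1 ∧ (∀ i, 0 < σ i) ∧
    X = U * Matrix.diagonal σ * Vᵀ ∧ P = U * Vᵀ

lemma orth_spec {m n : ℕ} {X P : Matrix (Fin m) (Fin n) ℝ}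
    (h : IsOrthogonalization X P) :
    (∑ i, ∑ j, X i j * P i j) = nuclearNorm X ∧ 0 ≤ nuclearNorm X ∧
      (nuclearNorm X = 0 ↔ X = 0) := by
  obtain ⟨k, U, V, σ, hU, hV, hσ, hX, hP⟩ := h
  set D : Matrix (Fin k) (Fin k) ℝ := Matrix.diagonal σ with hD
  set M : Matrix (Fin m) (Fin m) ℝ := U * D * Uᵀ with hM
  have hDT : Dᵀ = D := by rw [hD, Matrix.diagonal_transpose]
  have hXT : Xᵀ = V * D * Uᵀ := by
    rw [hX, Matrix.transpose_mul, Matrix.transpose_mul, Matrix.transpose_transpose,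
      hDT, Matrix.mul_assoc]
  have hPX : P * Xᵀ = M := by
    rw [hP, hXT, hM]
    calc U * Vᵀ * (V * D * Uᵀ) = U * ((Vᵀ * V) * (D * Uᵀ)) := by
          simp only [Matrix.mul_assoc]
      _ = U * (D * Uᵀ) := by rw [hV, Matrix.one_mul]
      _ = U * D * Uᵀ := by rw [Matrix.mul_assoc]
  have hXXT : X * Xᴴ = M * M := by
    have h1 : Xᴴ = Xᵀ := Matrix.conjTranspose_eq_transpose_of_trivial X
    rw [h1, hXT, hX, hM]
    calc U * D * Vᵀ * (V * D * Uᵀ) = U * D * ((Vᵀ * V) * (D * Uᵀ)) := by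
          simp only [Matrix.mul_assoc]
      _ = U * D * (D * Uᵀ) := by rw [hV, Matrix.one_mul]
      _ = U * D * Uᵀ * (U * D * Uᵀ) := by
          simp only [Matrix.mul_assoc]; rw [← Matrix.mul_assoc Uᵀ U (D * Uᵀ), hU, Matrix.one_mul]
  have hMpsd : Matrix.PosSemidef M := by
    have hDs : D = (Matrix.diagonal fun i => Real.sqrt (σ i)) *
        (Matrix.diagonal fun i => Real.sqrt (σ i)) := by
      rw [Matrix.diagonal_mul_diagonal, hD]
      exact congrArg _ (funext fun i => (Real.mul_self_sqrt (hσ i).le).symm)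
    have : M = (U * Matrix.diagonal fun i => Real.sqrt (σ i)) *
        (U * Matrix.diagonal fun i => Real.sqrt (σ i))ᴴ := by
      rw [Matrix.conjTranspose_eq_transpose_of_trivial, Matrix.transpose_mul,
        Matrix.diagonal_transpose, hM, hDs]
      simp only [Matrix.mul_assoc]
    rw [this]; exact Matrix.posSemidef_self_mul_conjTranspose _
  have hsqrt : ((Matrix.isHermitian_mul_conjTranspose_self X).eigenvectorUnitary.1 *
      Matrix.diagonal ((RCLike.ofReal : ℝ → ℝ) ∘ Real.sqrt ∘
        (Matrix.isHermitian_mul_conjTranspose_self X).eigenvalues) *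
      (star (Matrix.isHermitian_mul_conjTranspose_self X).eigenvectorUnitary :
        Matrix (Fin m) (Fin m) ℝ)) = M := by
    have hc := (Matrix.isHermitian_mul_conjTranspose_self X).cfc_eq Real.sqrt
    rw [Matrix.IsHermitian.cfc] at hc
    simp only [Unitary.conjStarAlgAut_apply] at hc
    open scoped MatrixOrder in
    rw [← hc, hXXT, ← cfcₙ_eq_cfc, ← CFC.sqrt_eq_real_sqrt (M * M)
        (hXXT ▸ Matrix.posSemidef_self_mul_conjTranspose X).nonneg,
      CFC.sqrt_mul_self M hMpsd.nonneg]
  have htrM : M.trace = ∑ i, σ i := by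
    rw [hM, Matrix.mul_assoc, Matrix.trace_mul_comm, Matrix.mul_assoc, hU, Matrix.mul_one,
      hD, Matrix.trace_diagonal]
  have hnn : nuclearNorm X = ∑ i, σ i := by rw [nuclearNorm, hsqrt, htrM]
  have hinner : (∑ i, ∑ j, X i j * P i j) = M.trace := by
    rw [← hPX, Matrix.trace]
    simp only [Matrix.diag, Matrix.mul_apply, Matrix.transpose_apply]
    exact Finset.sum_congr rfl fun i _ => Finset.sum_congr rfl fun j _ => mul_comm _ _
  refine ⟨by rw [hinner, htrM, hnn], ?_, ?_⟩
  · rw [hnn]; exact Finset.sum_nonneg fun i _ => (hσ i).le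
  · rw [hnn]
    constructor
    · intro hz
      have hk : IsEmpty (Fin k) := by
        by_contra hne
        rw [not_isEmpty_iff] at hne
        have := Finset.sum_pos (fun (i : Fin k) _ => hσ i) Finset.univ_nonempty
        linarith
      ext i j
      rw [hX]
      simp [Matrix.mul_apply]
    · intro hz
      have hMM : M * Mᴴ = 0 := by
        rw [hMpsd.1.eq, ← hXXT, hz, Matrix.zero_mul]
      have hM0 : M = 0 := Matrix.self_mul_conjTranspose_eq_zero.mp hMM
      rw [← htrM, hM0, Matrix.trace_zero]

lemma sum_shift_left {m n r : ℕ} (E : Matrix (Fin m) (Fin n) ℝ)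
    (G : Matrix (Fin m) (Fin r) ℝ) (B : Matrix (Fin r) (Fin n) ℝ) :
    ∑ i, ∑ j, E i j * (G * B) i j = ∑ i, ∑ k, (E * Bᵀ) i k * G i k := by
  simp only [Matrix.mul_apply, Matrix.transpose_apply, Finset.mul_sum, Finset.sum_mul]
  refine Finset.sum_congr rfl fun i _ => ?_
  rw [Finset.sum_comm]
  exact Finset.sum_congr rfl fun k _ => Finset.sum_congr rfl fun j _ => by ring

lemma sum_shift_right {m n r : ℕ} (E : Matrix (Fin m) (Fin n) ℝ)
    (A : Matrix (Fin m) (Fin r) ℝ) (G : Matrix (Fin r) (Fin n) ℝ) :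
    ∑ i, ∑ j, E i j * (A * G) i j = ∑ k, ∑ j, (Aᵀ * E) k j * G k j := by
  have h := sum_shift_left Eᵀ Gᵀ Aᵀ
  simp only [Matrix.transpose_apply, Matrix.transpose_transpose] at h
  calc ∑ i, ∑ j, E i j * (A * G) i j = ∑ j, ∑ i, E i j * (Gᵀ * Aᵀ) j i := by
        rw [Finset.sum_comm]
        refine Finset.sum_congr rfl fun j _ => Finset.sum_congr rfl fun i _ => ?_
        rw [← Matrix.transpose_mul, Matrix.transpose_apply]
    _ = ∑ j, ∑ k, (Eᵀ * A) j k * G k j := h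
    _ = ∑ k, ∑ j, (Aᵀ * E) k j * G k j := by
        rw [Finset.sum_comm]
        refine Finset.sum_congr rfl fun k _ => Finset.sum_congr rfl fun j _ => ?_
        congr 1
        simp [Matrix.mul_apply, Matrix.transpose_apply, mul_comm]

/-- Nuclear-norm descent identity for spectral gradient flow: if `A, B` evolve by
`Ȧ = −T(∇_A L)`, `Ḃ = −T(∇_B L)` for `L(A,B) = (1/2)‖AB − Y‖_F²`, with
`∇_A L = (AB − Y)Bᵀ` and `∇_B L = Aᵀ(AB − Y)` and `T` exact orthogonalization,
then `dL/dt = −‖∇_A L‖_* − ‖∇_B L‖_* ≤ 0`, with equality iff both gradients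
vanish. -/
theorem specGF_nuclear_descent {m n r : ℕ} (Y : Matrix (Fin m) (Fin n) ℝ)
    (A : ℝ → Matrix (Fin m) (Fin r) ℝ) (B : ℝ → Matrix (Fin r) (Fin n) ℝ)
    (GA : ℝ → Matrix (Fin m) (Fin r) ℝ) (GB : ℝ → Matrix (Fin r) (Fin n) ℝ)
    (hGA : ∀ t, IsOrthogonalization ((A t * B t - Y) * (B t)ᵀ) (GA t))
    (hGB : ∀ t, IsOrthogonalization ((A t)ᵀ * (A t * B t - Y)) (GB t))
    (hA : ∀ t i j, HasDerivAt (fun s => A s i j) (-(GA t i j)) t)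
    (hB : ∀ t i j, HasDerivAt (fun s => B s i j) (-(GB t i j)) t) :
    ∀ t : ℝ,
      HasDerivAt (fun s => (1 / 2 : ℝ) * ((A s * B s - Y) * (A s * B s - Y)ᵀ).trace)
        (-(nuclearNorm ((A t * B t - Y) * (B t)ᵀ))
          - nuclearNorm ((A t)ᵀ * (A t * B t - Y))) t ∧
      (-(nuclearNorm ((A t * B t - Y) * (B t)ᵀ))
          - nuclearNorm ((A t)ᵀ * (A t * B t - Y)) ≤ 0) ∧
      ((-(nuclearNorm ((A t * B t - Y) * (B t)ᵀ))
          - nuclearNorm ((A t)ᵀ * (A t * B t - Y)) = 0) ↔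
        ((A t * B t - Y) * (B t)ᵀ = 0 ∧ (A t)ᵀ * (A t * B t - Y) = 0)) := by
  intro t
  set E : ℝ → Matrix (Fin m) (Fin n) ℝ := fun s => A s * B s - Y with hE
  set E' : Matrix (Fin m) (Fin n) ℝ := -(GA t * B t) - A t * GB t with hE'
  obtain ⟨hin1, hge1, hz1⟩ := orth_spec (hGA t)
  obtain ⟨hin2, hge2, hz2⟩ := orth_spec (hGB t)
  have hent : ∀ i j, HasDerivAt (fun s => E s i j) (E' i j) t := by
    intro i j
    have h : HasDerivAt (fun s => (∑ k, A s i k * B s k j) - Y i j)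
        ((∑ k, ((-(GA t i k)) * B t k j + A t i k * (-(GB t k j))))) t :=
      (HasDerivAt.fun_sum fun k _ => (hA t i k).mul (hB t k j)).sub_const _
    have he : (fun s => E s i j) = fun s => (∑ k, A s i k * B s k j) - Y i j := by
      funext s; simp [hE, Matrix.mul_apply]
    rw [he]
    convert h using 1
    simp [hE', Matrix.mul_apply, Matrix.sub_apply, Finset.sum_add_distrib]
    ring_nf
  -- derivative of the sum-of-squares form
  have hsq : HasDerivAt (fun s => (1 / 2 : ℝ) * ∑ i, ∑ j, E s i j * E s i j)
      ((1 / 2 : ℝ) * ∑ i, ∑ j, (E' i j * E t i j + E t i j * E' i j)) t := by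
    exact HasDerivAt.const_mul _
      (HasDerivAt.fun_sum fun i _ => HasDerivAt.fun_sum fun j _ => (hent i j).mul (hent i j))
  -- the derivative value equals the nuclear norm expression
  have hval : (1 / 2 : ℝ) * ∑ i, ∑ j, (E' i j * E t i j + E t i j * E' i j)
      = -(nuclearNorm ((A t * B t - Y) * (B t)ᵀ))
          - nuclearNorm ((A t)ᵀ * (A t * B t - Y)) := by
    have step1 : (1 / 2 : ℝ) * ∑ i, ∑ j, (E' i j * E t i j + E t i j * E' i j)
        = ∑ i, ∑ j, E t i j * E' i j := by
      rw [Finset.mul_sum]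
      refine Finset.sum_congr rfl fun i _ => ?_
      rw [Finset.mul_sum]
      exact Finset.sum_congr rfl fun j _ => by ring
    have step2 : ∑ i, ∑ j, E t i j * E' i j
        = -(∑ i, ∑ j, E t i j * (GA t * B t) i j)
          - ∑ i, ∑ j, E t i j * (A t * GB t) i j := by
      simp only [hE', Matrix.sub_apply, Matrix.neg_apply, mul_sub, mul_neg,
        Finset.sum_sub_distrib, Finset.sum_neg_distrib]
    rw [step1, step2, sum_shift_left (E t) (GA t) (B t), sum_shift_right (E t) (A t) (GB t)]
    simp only [hE]
    rw [hin1, hin2]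
  -- rewrite the trace function as sum of squares
  have hfe : (fun s => (1 / 2 : ℝ) * ((A s * B s - Y) * (A s * B s - Y)ᵀ).trace)
      = fun s => (1 / 2 : ℝ) * ∑ i, ∑ j, E s i j * E s i j := by
    funext s
    simp only [hE, Matrix.trace, Matrix.diag, Matrix.mul_apply, Matrix.sub_apply,
      Matrix.transpose_apply]
  refine ⟨by rw [hfe]; exact hval ▸ hsq, by linarith, ?_⟩
  constructor
  · intro h
    have h1 : nuclearNorm ((A t * B t - Y) * (B t)ᵀ) = 0 := by linarith
    have h2 : nuclearNorm ((A t)ᵀ * (A t * B t - Y)) = 0 := by linarith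
    exact ⟨hz1.mp h1, hz2.mp h2⟩
  · rintro ⟨h1, h2⟩
    rw [hz1.mpr h1, hz2.mpr h2]
    ring
end
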